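/- Let Φ satisfy 1 ≤ φ(t)t²/Φ(t) ≤ m for all t > 0, and let a = inf_{t>0} t^m/Φ(t). For ε > 0 define Φ_ε(t) = Φ(t) + (ε/m) t^m. Then for all t > 0, ℓ_ε ≤ Φ_ε′(t) t / Φ_ε(t) ≤ m, where ℓ_ε = 1 + (m−1)εa/(εa + m) > 1, provided m > 1 and a > 0. -/
import Mathlib


open Set

/-- Index bounds for the perturbed N-function `Φ_ε(t) = Φ(t) + (ε/m) t^m`:
`ℓ_ε ≤ Φ_ε′(t) t / Φ_ε(t) ≤ m` for all `t > 0`, where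
`ℓ_ε = 1 + (m−1)εa/(εa+m) > 1` and `a = inf_{t>0} t^m/Φ(t) > 0`. -/
theorem stmt_3 (φ Φ : ℝ → ℝ) (m a ε : ℝ)
    (hm : 1 < m) (hε : 0 < ε) (ha : 0 < a)
    (hφpos : ∀ t > (0 : ℝ), 0 < φ t)
    (hΦpos : ∀ t > (0 : ℝ), 0 < Φ t)
    (hderiv : ∀ t > (0 : ℝ), HasDerivAt Φ (t * φ t) t)
    (hindex : ∀ t > (0 : ℝ), 1 ≤ φ t * t ^ 2 / Φ t ∧ φ t * t ^ 2 / Φ t ≤ m)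
    (hglb : IsGLB ((fun t => t ^ m / Φ t) '' Ioi (0 : ℝ)) a) :
    (1 < 1 + (m - 1) * ε * a / (ε * a + m)) ∧
    ∀ t > (0 : ℝ),
      1 + (m - 1) * ε * a / (ε * a + m)
          ≤ (ε * t ^ (m - 1) + t * φ t) * t / (Φ t + ε / m * t ^ m)
      ∧ (ε * t ^ (m - 1) + t * φ t) * t / (Φ t + ε / m * t ^ m) ≤ m := by
  have hm1 : 0 < m - 1 := by linarith
  have hm0 : 0 < m := by linarith
  have hS : 0 < ε * a + m := by nlinarith [mul_pos hε ha]
  constructor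
  · have : 0 < (m - 1) * ε * a / (ε * a + m) :=
      div_pos (mul_pos (mul_pos hm1 hε) ha) hS
    linarith
  intro t ht
  have hF : 0 < Φ t := hΦpos t ht
  have hP : 0 < t ^ m := Real.rpow_pos_of_pos ht m
  have hD : 0 < Φ t + ε / m * t ^ m := by positivity
  have ht' : t ^ (m - 1) * t = t ^ m := by
    rw [← Real.rpow_add_one ht.ne']; ring_nf
  have hnum : (ε * t ^ (m - 1) + t * φ t) * t = ε * t ^ m + φ t * t ^ 2 := by
    rw [← ht']; ring
  have hlo : Φ t ≤ φ t * t ^ 2 := (one_le_div hF).mp (hindex t ht).1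
  have hup : φ t * t ^ 2 ≤ m * Φ t := (div_le_iff₀ hF).mp (hindex t ht).2
  have haF : a * Φ t ≤ t ^ m := (le_div_iff₀ hF).mp (hglb.1 ⟨t, ht, rfl⟩)
  rw [hnum]
  constructor
  · rw [le_div_iff₀ hD]
    have key : (1 + (m - 1) * ε * a / (ε * a + m)) * (Φ t + ε / m * t ^ m) =
        (m * (ε * a) + m) * (m * Φ t + ε * t ^ m) / ((ε * a + m) * m) := by
      field_simp
      ring
    rw [key, div_le_iff₀ (by positivity)]
    have hkey : 0 ≤ (m - 1) * ε * (t ^ m - a * Φ t) :=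
      mul_nonneg (mul_nonneg hm1.le hε.le) (by linarith)
    nlinarith [hkey, mul_nonneg hm0.le hkey,
      mul_nonneg (mul_nonneg hS.le hm0.le) (sub_nonneg.2 hlo)]
  · rw [div_le_iff₀ hD]
    have hem : m * (ε / m * t ^ m) = ε * t ^ m := by
      field_simp
    nlinarith [hup]
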